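/- Over the field Z/2, consider the free DGA generated by elements b, a, y, x, z with gradings |b| = 1+m, |a| = |y| = m, |x| = |z| = m-1 for a fixed integer m ≠ 1, and differential ∂b = 0, ∂y = 0, ∂x = 0, ∂a = z + x, ∂z = 0; and a second DGA on generators b, a, y, x, z' with |z'| = 1-m and ∂'a = x, ∂'z' = 0 (all else zero). Then: (i) every augmentation ε of either DGA vanishes on z (resp. z'); (ii) augmentations of the two DGAs are in canonical bijection via the identity on the shared generators; and (iii) for corresponding augmentations, the linearized homology in degree 1-m of the second DGA equals that of the first plus one extra dimension spanned by z': LCH_{1-m}(A', ∂', ε) ≅ LCH_{1-m}(A, ∂, ε) ⊕ Z/2⟨z'⟩. In particular the linearized homologies differ, for every pair of corresponding augmentations. -/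

import Mathlib

/-- The five generators `b, a, y, x, z` (with `z` reinterpreted as `z'` in the second
DGA). -/
inductive Gen : Type
  | b | a | y | x | z
  deriving DecidableEq

/-- A generator as an element of the free DGA `MonoidAlgebra (ZMod 2) (FreeMonoid Gen)`. -/
noncomputable def og (g : Gen) : MonoidAlgebra (ZMod 2) (FreeMonoid Gen) :=
  MonoidAlgebra.single (FreeMonoid.of g) 1

/-- The gradings of the first DGA: `|b| = 1+m`, `|a| = |y| = m`, `|x| = |z| = m-1`. -/
def grm (m : ℤ) : Gen → ℤ
  | .b => 1 + m
  | .a => m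
  | .y => m
  | .x => m - 1
  | .z => m - 1

/-- The gradings of the second DGA, where `z` is replaced by `z'` with `|z'| = 1-m`. -/
def grm' (m : ℤ) : Gen → ℤ
  | .b => 1 + m
  | .a => m
  | .y => m
  | .x => m - 1
  | .z => 1 - m

/-- Augmentations: unital algebra maps to `ℤ/2` vanishing on generators of nonzero degree
and annihilating the image of the differential. -/
def AugSet (gr : Gen → ℤ)
    (dif : MonoidAlgebra (ZMod 2) (FreeMonoid Gen) →ₗ[ZMod 2]
      MonoidAlgebra (ZMod 2) (FreeMonoid Gen)) :
    Set (MonoidAlgebra (ZMod 2) (FreeMonoid Gen) →ₐ[ZMod 2] ZMod 2) :=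
  {ε | (∀ a, ε (dif a) = 0) ∧ ∀ g : Gen, gr g ≠ 0 → ε (og g) = 0}

/-- The span of the generators of degree `k` in the linearized complex
`V = span of generators`. -/
noncomputable def Vdeg (gr : Gen → ℤ) (k : ℤ) : Submodule (ZMod 2) (Gen →₀ ZMod 2) :=
  Submodule.span (ZMod 2) {v | ∃ g : Gen, gr g = k ∧ v = Finsupp.single g (1 : ZMod 2)}

/-- Degree-`k` cycles of the linearized differential `D`. -/
noncomputable def Zk (D : (Gen →₀ ZMod 2) →ₗ[ZMod 2] (Gen →₀ ZMod 2)) (gr : Gen → ℤ)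
    (k : ℤ) : Submodule (ZMod 2) (Gen →₀ ZMod 2) :=
  LinearMap.ker D ⊓ Vdeg gr k

/-- Degree-`k` boundaries (inside the cycles) of the linearized differential `D`. -/
noncomputable def Bk (D : (Gen →₀ ZMod 2) →ₗ[ZMod 2] (Gen →₀ ZMod 2)) (gr : Gen → ℤ)
    (k : ℤ) : Submodule (ZMod 2) (Gen →₀ ZMod 2) :=
  Submodule.map D (Vdeg gr (k + 1)) ⊓ Zk D gr k

/-- Subquotient `Z / (B ∩ Z)`-style homology of a pair of submodules. -/
def SubQuot {K M : Type} [CommRing K] [AddCommGroup M] [Module K M]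
    (Z B : Submodule K M) : Type :=
  Z ⧸ (Submodule.comap Z.subtype B)

noncomputable instance {K M : Type} [CommRing K] [AddCommGroup M] [Module K M]
    (Z B : Submodule K M) : AddCommGroup (SubQuot Z B) :=
  inferInstanceAs (AddCommGroup (Z ⧸ (Submodule.comap Z.subtype B)))

noncomputable instance {K M : Type} [CommRing K] [AddCommGroup M] [Module K M]
    (Z B : Submodule K M) : Module K (SubQuot Z B) :=
  inferInstanceAs (Module K (Z ⧸ (Submodule.comap Z.subtype B)))

/-- Linearized contact homology in degree `k` of a linearized differential `D` on the
span of the generators: degree-`k` cycles modulo boundaries of degree-`(k+1)` elements. -/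
def LCHdeg (D : (Gen →₀ ZMod 2) →ₗ[ZMod 2] (Gen →₀ ZMod 2)) (gr : Gen → ℤ) (k : ℤ) :
    Type :=
  SubQuot (Zk D gr k) (Bk D gr k)

noncomputable instance (D : (Gen →₀ ZMod 2) →ₗ[ZMod 2] (Gen →₀ ZMod 2))
    (gr : Gen → ℤ) (k : ℤ) : AddCommGroup (LCHdeg D gr k) :=
  inferInstanceAs (AddCommGroup (SubQuot (Zk D gr k) (Bk D gr k)))

noncomputable instance (D : (Gen →₀ ZMod 2) →ₗ[ZMod 2] (Gen →₀ ZMod 2))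
    (gr : Gen → ℤ) (k : ℤ) : Module (ZMod 2) (LCHdeg D gr k) :=
  inferInstanceAs (Module (ZMod 2) (SubQuot (Zk D gr k) (Bk D gr k)))

/-! Since `m ≠ 1`, the generator `z` (resp. `z'`) has nonzero degree, so every augmentation
kills it. For an augmentation `ε`, the map `ε ∘ ∂` obeys the Leibniz rule and is therefore
determined by its values on generators; as `ε z = 0` these agree for `∂` and `∂'`, so both DGAs
have the same augmentations. In the linearized complexes no generator has degree `2 - m`, so
there are no boundaries in degree `1 - m`, and every generator of degree `1 - m` is closed,
hence a linearized cycle. Thus `LCH_{1-m}` is freely spanned by the generators of degree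
`1 - m`: `b` when `m = 0`, plus `z'` in the second DGA. -/

instance : Fintype Gen :=
  ⟨{.b, .a, .y, .x, .z}, fun g => by cases g <;> decide⟩

local notation "𝒜" => MonoidAlgebra (ZMod 2) (FreeMonoid Gen)

theorem map_one_of_leibniz {R A : Type*} [Semiring R] [Ring A] [Module R A] {d : A →ₗ[R] A}
    (hL : ∀ u v, d (u * v) = d u * v + u * d v) : d 1 = 0 := by
  simpa using hL 1 1

theorem map_algebraMap_of_leibniz {R A : Type*} [CommSemiring R] [Ring A] [Algebra R A]
    {d : A →ₗ[R] A} (hL : ∀ u v, d (u * v) = d u * v + u * d v) (c : R) :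
    d (algebraMap R A c) = 0 := by
  rw [Algebra.algebraMap_eq_smul_one, map_smul, map_one_of_leibniz hL, smul_zero]

theorem algHom_comp_leibniz_ext {R α : Type*} [CommRing R]
    {d d' : MonoidAlgebra R (FreeMonoid α) →ₗ[R] MonoidAlgebra R (FreeMonoid α)}
    (hL : ∀ u v, d (u * v) = d u * v + u * d v)
    (hL' : ∀ u v, d' (u * v) = d' u * v + u * d' v)
    (ε : MonoidAlgebra R (FreeMonoid α) →ₐ[R] R)
    (hgen : ∀ g, ε (d (.single (.of g) 1)) = ε (d' (.single (.of g) 1))) :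
    ε.toLinearMap ∘ₗ d = ε.toLinearMap ∘ₗ d' := by
  ext w
  induction w using FreeMonoid.recOn with
  | one =>
    simp only [LinearMap.comp_apply, MonoidAlgebra.lsingle_apply, AlgHom.toLinearMap_apply]
    rw [← MonoidAlgebra.one_def, map_one_of_leibniz hL, map_one_of_leibniz hL']
  | of_mul g w ih =>
    simp only [LinearMap.comp_apply, MonoidAlgebra.lsingle_apply, AlgHom.toLinearMap_apply] at ih ⊢
    rw [← one_mul (1 : R), ← MonoidAlgebra.single_mul_single, hL, hL']
    simp only [map_add, map_mul, hgen g, ih]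

theorem augSet_congr {gr gr' : Gen → ℤ} {dif dif' : 𝒜 →ₗ[ZMod 2] 𝒜}
    (hgr : ∀ g, gr g ≠ 0 ↔ gr' g ≠ 0)
    (hdif : ∀ ε : 𝒜 →ₐ[ZMod 2] ZMod 2,
      (∀ g, gr g ≠ 0 → ε (og g) = 0) → ∀ u, ε (dif u) = ε (dif' u)) :
    AugSet gr dif = AugSet gr' dif' := by
  ext ε
  constructor
  · rintro ⟨hε, hgen⟩
    exact ⟨fun u => hdif ε hgen u ▸ hε u, fun g hg => hgen g ((hgr g).2 hg)⟩
  · rintro ⟨hε, hgen⟩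
    have hgen' (g) (hg : gr g ≠ 0) : ε (og g) = 0 := hgen g ((hgr g).1 hg)
    exact ⟨fun u => (hdif ε hgen' u).symm ▸ hε u, hgen'⟩

theorem vdeg_eq_supported (gr : Gen → ℤ) (k : ℤ) :
    Vdeg gr k = Finsupp.supported (ZMod 2) (ZMod 2) {g | gr g = k} := by
  rw [Vdeg, Finsupp.supported_eq_span_single]
  congr 1
  ext v
  simp [eq_comm]

instance (D : (Gen →₀ ZMod 2) →ₗ[ZMod 2] (Gen →₀ ZMod 2)) (gr : Gen → ℤ) (k : ℤ) :
    FiniteDimensional (ZMod 2) (LCHdeg D gr k) :=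
  Module.Finite.quotient (ZMod 2) _

theorem finrank_lchDeg {D : (Gen →₀ ZMod 2) →ₗ[ZMod 2] (Gen →₀ ZMod 2)} {gr : Gen → ℤ} {k : ℤ}
    (hbd : ∀ g, gr g ≠ k + 1) (hcyc : ∀ g, gr g = k → D (Finsupp.single g 1) = 0) :
    Module.finrank (ZMod 2) (LCHdeg D gr k) = Fintype.card {g // gr g = k} := by
  have hB : Bk D gr k = ⊥ := by
    have hempty : {g | gr g = k + 1} = ∅ := Set.eq_empty_iff_forall_notMem.2 hbd
    rw [Bk, vdeg_eq_supported, hempty, Finsupp.supported_empty,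
      Submodule.map_bot, bot_inf_eq]
  have hZ : Zk D gr k = Vdeg gr k := by
    rw [Zk, inf_eq_right, Vdeg, Submodule.span_le]
    rintro _ ⟨g, hg, rfl⟩
    exact hcyc g hg
  have e : LCHdeg D gr k ≃ₗ[ZMod 2] ({g | gr g = k} →₀ ZMod 2) :=
    (Submodule.quotEquivOfEqBot _ (by rw [hB, Submodule.comap_bot, Submodule.ker_subtype])).trans
      ((LinearEquiv.ofEq _ _ (hZ.trans (vdeg_eq_supported gr k))).trans
        (Finsupp.supportedEquivFinsupp _))
  rw [e.finrank_eq, Module.finrank_finsupp_self]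
  rfl

theorem linearized_single_eq_zero {dif : 𝒜 →ₗ[ZMod 2] 𝒜}
    (hL : ∀ u v, dif (u * v) = dif u * v + u * dif v) {σ : 𝒜 →ₐ[ZMod 2] 𝒜}
    {D : (Gen →₀ ZMod 2) →ₗ[ZMod 2] (Gen →₀ ZMod 2)} {g : Gen} {c : ZMod 2}
    (hσ : σ (og g) = og g + algebraMap (ZMod 2) 𝒜 c)
    (hD : ∀ g', D (Finsupp.single g 1) g' = (σ (dif (σ (og g)))).coeff (FreeMonoid.of g'))
    (hg : dif (og g) = 0) : D (Finsupp.single g 1) = 0 := by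
  ext g'
  rw [hD, hσ, map_add, hg, map_algebraMap_of_leibniz hL, add_zero, map_zero]
  simp

theorem augmentation_comp_dif_eq {dif dif' : 𝒜 →ₗ[ZMod 2] 𝒜}
    (hL : ∀ u v, dif (u * v) = dif u * v + u * dif v)
    (hL' : ∀ u v, dif' (u * v) = dif' u * v + u * dif' v)
    (hb : dif (og .b) = 0) (hy : dif (og .y) = 0) (hx : dif (og .x) = 0)
    (ha : dif (og .a) = og .z + og .x) (hz : dif (og .z) = 0)
    (hb' : dif' (og .b) = 0) (hy' : dif' (og .y) = 0) (hx' : dif' (og .x) = 0)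
    (ha' : dif' (og .a) = og .x) (hz' : dif' (og .z) = 0)
    (ε : 𝒜 →ₐ[ZMod 2] ZMod 2) (hεz : ε (og .z) = 0) (u : 𝒜) :
    ε (dif u) = ε (dif' u) := by
  refine LinearMap.congr_fun (algHom_comp_leibniz_ext hL hL' ε fun g => ?_) u
  change ε (dif (og g)) = ε (dif' (og g))
  cases g <;> simp only [hb, hy, hx, ha, hz, hb', hy', hx', ha', hz', map_add, hεz, zero_add]

theorem card_grm'_eq {m : ℤ} (hm : m ≠ 1) :
    Fintype.card {g // grm' m g = 1 - m} = Fintype.card {g // grm m g = 1 - m} + 1 := by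
  have hz : Gen.z ∉ Finset.univ.filter (grm m · = 1 - m) := by
    rw [Finset.mem_filter_univ, grm]
    omega
  have hfilter : Finset.univ.filter (grm' m · = 1 - m)
      = insert .z (Finset.univ.filter (grm m · = 1 - m)) := by
    ext g
    simp only [Finset.mem_insert, Finset.mem_filter_univ]
    cases g <;> simp [grm, grm']
  rw [Fintype.card_subtype, Fintype.card_subtype, hfilter, Finset.card_insert_of_notMem hz]

theorem augSet_grm_eq_augSet_grm' {m : ℤ} (hm : m ≠ 1) {dif dif' : 𝒜 →ₗ[ZMod 2] 𝒜}
    (hL : ∀ u v, dif (u * v) = dif u * v + u * dif v)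
    (hL' : ∀ u v, dif' (u * v) = dif' u * v + u * dif' v)
    (hb : dif (og .b) = 0) (hy : dif (og .y) = 0) (hx : dif (og .x) = 0)
    (ha : dif (og .a) = og .z + og .x) (hz : dif (og .z) = 0)
    (hb' : dif' (og .b) = 0) (hy' : dif' (og .y) = 0) (hx' : dif' (og .x) = 0)
    (ha' : dif' (og .a) = og .x) (hz' : dif' (og .z) = 0) :
    AugSet (grm m) dif = AugSet (grm' m) dif' :=
  augSet_congr (fun g => by cases g <;> simp only [grm, grm']; omega) fun ε hε =>
    augmentation_comp_dif_eq hL hL' hb hy hx ha hz hb' hy' hx' ha' hz' ε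
      (hε .z (by simp only [grm]; omega))

theorem stmt_19_general (m : ℤ) (hm : m ≠ 1)
    (dif dif' : MonoidAlgebra (ZMod 2) (FreeMonoid Gen) →ₗ[ZMod 2]
      MonoidAlgebra (ZMod 2) (FreeMonoid Gen))
    (hL : ∀ u v, dif (u * v) = dif u * v + u * dif v)
    (hL' : ∀ u v, dif' (u * v) = dif' u * v + u * dif' v)
    (hb : dif (og .b) = 0) (hy : dif (og .y) = 0) (hx : dif (og .x) = 0)
    (ha : dif (og .a) = og .z + og .x) (hz : dif (og .z) = 0)
    (hb' : dif' (og .b) = 0) (hy' : dif' (og .y) = 0) (hx' : dif' (og .x) = 0)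
    (ha' : dif' (og .a) = og .x) (hz' : dif' (og .z) = 0) :
    -- (i) every augmentation vanishes on `z` (resp. `z'`)
    ((∀ ε ∈ AugSet (grm m) dif, ε (og .z) = 0) ∧
      (∀ ε' ∈ AugSet (grm' m) dif', ε' (og .z) = 0)) ∧
    -- (ii) canonical bijection of augmentations, the identity on shared generators
    (∃ e : (AugSet (grm m) dif) ≃ (AugSet (grm' m) dif'),
      ∀ (ε : AugSet (grm m) dif) (g : Gen), (e ε).1 (og g) = ε.1 (og g)) ∧
    -- (iii) the linearized homologies in degree `1-m` differ by one dimension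
    (∀ ε ε' : MonoidAlgebra (ZMod 2) (FreeMonoid Gen) →ₐ[ZMod 2] ZMod 2,
      ε ∈ AugSet (grm m) dif → ε' ∈ AugSet (grm' m) dif' →
      (∀ g : Gen, ε (og g) = ε' (og g)) →
      ∀ σ σ' : MonoidAlgebra (ZMod 2) (FreeMonoid Gen) →ₐ[ZMod 2]
        MonoidAlgebra (ZMod 2) (FreeMonoid Gen),
      (∀ g : Gen, σ (og g) = og g +
        algebraMap (ZMod 2) (MonoidAlgebra (ZMod 2) (FreeMonoid Gen)) (ε (og g))) →
      (∀ g : Gen, σ' (og g) = og g +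
        algebraMap (ZMod 2) (MonoidAlgebra (ZMod 2) (FreeMonoid Gen)) (ε' (og g))) →
      ∀ D D' : (Gen →₀ ZMod 2) →ₗ[ZMod 2] (Gen →₀ ZMod 2),
      (∀ g g' : Gen, D (Finsupp.single g 1) g' =
        ((σ (dif (σ (og g)))).coeff : FreeMonoid Gen →₀ ZMod 2) (FreeMonoid.of g')) →
      (∀ g g' : Gen, D' (Finsupp.single g 1) g' =
        ((σ' (dif' (σ' (og g)))).coeff : FreeMonoid Gen →₀ ZMod 2) (FreeMonoid.of g')) →
      ∃ _ : LCHdeg D' (grm' m) (1 - m) ≃ₗ[ZMod 2]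
          (LCHdeg D (grm m) (1 - m)) × (ZMod 2),
        Module.finrank (ZMod 2) (LCHdeg D' (grm' m) (1 - m))
          = Module.finrank (ZMod 2) (LCHdeg D (grm m) (1 - m)) + 1) := by
  refine ⟨⟨fun ε hε => hε.2 .z (by simp only [grm]; omega),
      fun ε' hε' => hε'.2 .z (by simp only [grm']; omega)⟩,
    ⟨Equiv.setCongr (augSet_grm_eq_augSet_grm' hm hL hL' hb hy hx ha hz hb' hy' hx' ha' hz'),
      fun _ _ => rfl⟩, ?_⟩
  intro ε ε' _ _ _ σ σ' hσ hσ' D D' hD hD'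
  have hcyc : ∀ g, grm m g = 1 - m → D (Finsupp.single g 1) = 0 := fun g hg =>
    linearized_single_eq_zero hL (hσ g) (hD g) <| by
      cases g <;> first | assumption | (simp only [grm] at hg; omega)
  have hcyc' : ∀ g, grm' m g = 1 - m → D' (Finsupp.single g 1) = 0 := fun g hg =>
    linearized_single_eq_zero hL' (hσ' g) (hD' g) <| by
      cases g <;> first | assumption | (simp only [grm'] at hg; omega)
  have hrank : Module.finrank (ZMod 2) (LCHdeg D' (grm' m) (1 - m))
      = Module.finrank (ZMod 2) (LCHdeg D (grm m) (1 - m)) + 1 := by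
    rw [finrank_lchDeg (fun g => by cases g <;> simp only [grm'] <;> omega) hcyc',
      finrank_lchDeg (fun g => by cases g <;> simp only [grm] <;> omega) hcyc, card_grm'_eq hm]
  refine ⟨LinearEquiv.ofFinrankEq _ _ ?_, hrank⟩
  rw [Module.finrank_prod, Module.finrank_self, hrank]

/-- Over `ℤ/2`, the two free DGAs on `b, a, y, x, z` (resp. `z'`) with the indicated
gradings (`m ≠ 1`) and differentials `∂a = z + x` (resp. `∂'a = x`), all other generators
closed, satisfy: (i) every augmentation vanishes on `z` (resp. `z'`); (ii) augmentations
of the two DGAs are in canonical bijection via the identity on the shared generators;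
(iii) for corresponding augmentations, the linearized homology in degree `1-m` of the
second DGA is that of the first plus one extra `ℤ/2`, so the linearized homologies
differ. -/
theorem stmt_19 (m : ℤ) (hm : m ≠ 1)
    (dif dif' : MonoidAlgebra (ZMod 2) (FreeMonoid Gen) →ₗ[ZMod 2]
      MonoidAlgebra (ZMod 2) (FreeMonoid Gen))
    (hL : ∀ u v, dif (u * v) = dif u * v + u * dif v)
    (hL' : ∀ u v, dif' (u * v) = dif' u * v + u * dif' v)
    (hd2 : ∀ u, dif (dif u) = 0) (hd2' : ∀ u, dif' (dif' u) = 0)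
    (hb : dif (og .b) = 0) (hy : dif (og .y) = 0) (hx : dif (og .x) = 0)
    (ha : dif (og .a) = og .z + og .x) (hz : dif (og .z) = 0)
    (hb' : dif' (og .b) = 0) (hy' : dif' (og .y) = 0) (hx' : dif' (og .x) = 0)
    (ha' : dif' (og .a) = og .x) (hz' : dif' (og .z) = 0) :
    -- (i) every augmentation vanishes on `z` (resp. `z'`)
    ((∀ ε ∈ AugSet (grm m) dif, ε (og .z) = 0) ∧
      (∀ ε' ∈ AugSet (grm' m) dif', ε' (og .z) = 0)) ∧
    -- (ii) canonical bijection of augmentations, the identity on shared generators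
    (∃ e : (AugSet (grm m) dif) ≃ (AugSet (grm' m) dif'),
      ∀ (ε : AugSet (grm m) dif) (g : Gen), (e ε).1 (og g) = ε.1 (og g)) ∧
    -- (iii) the linearized homologies in degree `1-m` differ by one dimension
    (∀ ε ε' : MonoidAlgebra (ZMod 2) (FreeMonoid Gen) →ₐ[ZMod 2] ZMod 2,
      ε ∈ AugSet (grm m) dif → ε' ∈ AugSet (grm' m) dif' →
      (∀ g : Gen, ε (og g) = ε' (og g)) →
      ∀ σ σ' : MonoidAlgebra (ZMod 2) (FreeMonoid Gen) →ₐ[ZMod 2]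
        MonoidAlgebra (ZMod 2) (FreeMonoid Gen),
      (∀ g : Gen, σ (og g) = og g +
        algebraMap (ZMod 2) (MonoidAlgebra (ZMod 2) (FreeMonoid Gen)) (ε (og g))) →
      (∀ g : Gen, σ' (og g) = og g +
        algebraMap (ZMod 2) (MonoidAlgebra (ZMod 2) (FreeMonoid Gen)) (ε' (og g))) →
      ∀ D D' : (Gen →₀ ZMod 2) →ₗ[ZMod 2] (Gen →₀ ZMod 2),
      (∀ g g' : Gen, D (Finsupp.single g 1) g' =
        ((σ (dif (σ (og g)))).coeff : FreeMonoid Gen →₀ ZMod 2) (FreeMonoid.of g')) →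
      (∀ g g' : Gen, D' (Finsupp.single g 1) g' =
        ((σ' (dif' (σ' (og g)))).coeff : FreeMonoid Gen →₀ ZMod 2) (FreeMonoid.of g')) →
      ∃ _ : LCHdeg D' (grm' m) (1 - m) ≃ₗ[ZMod 2]
          (LCHdeg D (grm m) (1 - m)) × (ZMod 2),
        Module.finrank (ZMod 2) (LCHdeg D' (grm' m) (1 - m))
          = Module.finrank (ZMod 2) (LCHdeg D (grm m) (1 - m)) + 1) :=
  stmt_19_general m hm dif dif' hL hL' hb hy hx ha hz hb' hy' hx' ha' hz'
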